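/- The Fisher information of the noncentral chi-squared family {χ²_1(2θ) : θ > 0} (one degree of freedom, noncentrality 2θ) satisfies i(θ) < 1/(2θ) for every θ > 0; equivalently, i(θ) is strictly less than half the Fisher information 1/θ of the Poisson family with mean θ. -/

import Mathlib

open MeasureTheory Set Real

/-- Density of the noncentral chi-squared distribution χ²₁(2θ). -/
noncomputable def g1 (θ x : ℝ) : ℝ :=
  (2 * Real.pi * x) ^ (-(1:ℝ)/2) * Real.exp (-θ - x / 2) * Real.cosh (Real.sqrt (2 * θ * x))

/-- Fisher information of the family {χ²₁(2θ) : θ > 0}. -/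
noncomputable def fisherInfo (θ : ℝ) : ℝ :=
  (1 / (2 * θ)) *
    (∫ x in Set.Ioi (0:ℝ), x * Real.tanh (Real.sqrt (2 * θ * x)) ^ 2 * g1 θ x) - 1

/-!
Since `tanh² < 1` on `(0, ∞)`, the integral in `i(θ)` is strictly smaller than the mean `1 + 2θ`
of `χ²₁(2θ)`, and `(1 + 2θ) / (2θ) - 1 = 1 / (2θ)`. The mean is computed by writing the variable
as `Z²` with `Z ~ N(√(2θ), 1)`, so that it equals `Var Z + (E Z)² = 1 + 2θ`.
-/

open ProbabilityTheory
open scoped NNReal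

section Gaussian

variable (μ : ℝ) {v : ℝ≥0}

lemma gaussianPDFReal_neg_apply (x : ℝ) :
    gaussianPDFReal μ v (-x) = gaussianPDFReal (-μ) v x := by
  simp only [gaussianPDFReal]
  ring_nf

lemma integrable_sq_mul_gaussianPDFReal (hv : v ≠ 0) :
    Integrable (fun x ↦ x ^ 2 * gaussianPDFReal μ v x) := by
  have h := (memLp_id_gaussianReal (μ := μ) (v := v) 2).integrable_sq
  rw [gaussianReal_of_var_ne_zero _ hv, integrable_withDensity_iff_integrable_smul'
    (measurable_gaussianPDF _ _) (ae_of_all _ fun _ ↦ gaussianPDF_lt_top)] at h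
  simpa [toReal_gaussianPDF, mul_comm] using h

lemma integral_sq_mul_gaussianPDFReal (hv : v ≠ 0) :
    ∫ x, x ^ 2 * gaussianPDFReal μ v x = v + μ ^ 2 := by
  have h := variance_eq_sub (memLp_id_gaussianReal (μ := μ) (v := v) 2)
  simp only [Pi.pow_apply, id_eq] at h
  rw [variance_id_gaussianReal, integral_id_gaussianReal,
    integral_gaussianReal_eq_integral_smul hv] at h
  simp_rw [smul_eq_mul, mul_comm (gaussianPDFReal μ v _)] at h
  linarith

end Gaussian

lemma integral_Ioi_eq_half_integral_of_even {f : ℝ → ℝ} (hf : ∀ x, f (-x) = f x) :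
    ∫ x in Ioi 0, f x = (∫ x, f x) / 2 := by
  have h : (fun x ↦ f |x|) = f := funext fun x ↦ by rcases abs_choice x with h | h <;> simp [h, hf]
  have h2 := integral_comp_abs (f := f)
  rw [h] at h2
  linarith

lemma setIntegral_lt_setIntegral_of_forall_lt {α : Type*} [MeasurableSpace α] {μ : Measure α}
    {s : Set α} {f g : α → ℝ} (hs : MeasurableSet s) (hμs : μ s ≠ 0)
    (hf : IntegrableOn f s μ) (hg : IntegrableOn g s μ) (hlt : ∀ x ∈ s, f x < g x) :
    ∫ x in s, f x ∂μ < ∫ x in s, g x ∂μ := by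
  have hpos : Function.support (fun x ↦ g x - f x) ∩ s = s :=
    inter_eq_right.2 fun x hx ↦ (sub_pos.2 (hlt x hx)).ne'
  rw [← sub_pos, ← integral_sub hg hf,
    setIntegral_pos_iff_support_of_nonneg_ae (f := fun x ↦ g x - f x) _ (hg.sub hf), hpos]
  · exact pos_iff_ne_zero.2 hμs
  · filter_upwards [ae_restrict_mem hs] with x hx using sub_nonneg.2 (hlt x hx).le

@[fun_prop]
lemma Real.measurable_tanh : Measurable tanh := by
  rw [show tanh = fun x ↦ sinh x / cosh x from funext tanh_eq_sinh_div_cosh]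
  fun_prop

lemma g1_pos (θ : ℝ) {x : ℝ} (hx : 0 < x) : 0 < g1 θ x := by
  unfold g1
  have := cosh_pos √(2 * θ * x)
  positivity

@[fun_prop]
lemma measurable_g1 (θ : ℝ) : Measurable (g1 θ) := by
  unfold g1
  fun_prop

/-- The density of `Z²` for `Z ~ N(√(2θ), 1)`, obtained by folding the Gaussian densities at
`±√(2θ)`, is `g1 θ`. -/
lemma two_mul_mul_g1_sq {θ u : ℝ} (hθ : 0 ≤ θ) (hu : 0 < u) :
    2 * u * g1 θ (u ^ 2) = gaussianPDFReal √(2 * θ) 1 u + gaussianPDFReal (-√(2 * θ)) 1 u := by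
  set a := √(2 * θ)
  have ha2 : a ^ 2 = 2 * θ := sq_sqrt (by linarith)
  have hpow : (2 * π * u ^ 2) ^ (-(1:ℝ) / 2) = (√(2 * π))⁻¹ * u⁻¹ := by
    rw [show -(1:ℝ) / 2 = -(1 / 2) by ring, rpow_neg (by positivity), ← Real.sqrt_eq_rpow,
      sqrt_mul (by positivity), sqrt_sq hu.le, mul_inv]
  have hsqrt : √(2 * θ * u ^ 2) = a * u := by rw [sqrt_mul (by positivity), sqrt_sq hu.le]
  have e₁ : -(u - a) ^ 2 / 2 = (-θ - u ^ 2 / 2) + a * u := by linear_combination -ha2 / 2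
  have e₂ : -(u - -a) ^ 2 / 2 = (-θ - u ^ 2 / 2) + -(a * u) := by linear_combination -ha2 / 2
  simp only [g1, gaussianPDFReal, hpow, hsqrt, NNReal.coe_one, mul_one]
  rw [e₁, e₂, exp_add, exp_add, cosh_eq]
  field_simp

section Mean

variable {θ : ℝ}

lemma eqOn_comp_rpow_two_mul_g1 (hθ : 0 ≤ θ) :
    EqOn (fun u ↦ (|2| * u ^ ((2:ℝ) - 1)) • (u ^ (2:ℝ) * g1 θ (u ^ (2:ℝ))))
      (fun u ↦ u ^ 2 * gaussianPDFReal √(2 * θ) 1 u + u ^ 2 * gaussianPDFReal (-√(2 * θ)) 1 u)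
      (Ioi 0) := by
  intro u hu
  simp only [smul_eq_mul, rpow_two, abs_two]
  rw [← mul_add, ← two_mul_mul_g1_sq hθ hu, show (2:ℝ) - 1 = 1 by norm_num, rpow_one]
  ring

lemma integrableOn_mul_g1 (hθ : 0 ≤ θ) : IntegrableOn (fun x ↦ x * g1 θ x) (Ioi 0) :=
  (integrableOn_Ioi_comp_rpow_iff _ two_ne_zero).1 <|
    ((integrable_sq_mul_gaussianPDFReal _ one_ne_zero).add
      (integrable_sq_mul_gaussianPDFReal _ one_ne_zero)).integrableOn.congr_fun
      (eqOn_comp_rpow_two_mul_g1 hθ).symm measurableSet_Ioi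

lemma integral_mul_g1 (hθ : 0 ≤ θ) : ∫ x in Ioi 0, x * g1 θ x = 1 + 2 * θ := by
  have heven (u : ℝ) : (-u) ^ 2 * gaussianPDFReal √(2 * θ) 1 (-u)
      + (-u) ^ 2 * gaussianPDFReal (-√(2 * θ)) 1 (-u)
      = u ^ 2 * gaussianPDFReal √(2 * θ) 1 u + u ^ 2 * gaussianPDFReal (-√(2 * θ)) 1 u := by
    rw [neg_sq, gaussianPDFReal_neg_apply, gaussianPDFReal_neg_apply, neg_neg, add_comm]
  rw [← integral_comp_rpow_Ioi _ two_ne_zero,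
    setIntegral_congr_fun measurableSet_Ioi (eqOn_comp_rpow_two_mul_g1 hθ),
    integral_Ioi_eq_half_integral_of_even heven,
    integral_add (integrable_sq_mul_gaussianPDFReal _ one_ne_zero)
      (integrable_sq_mul_gaussianPDFReal _ one_ne_zero),
    integral_sq_mul_gaussianPDFReal _ one_ne_zero, integral_sq_mul_gaussianPDFReal _ one_ne_zero,
    neg_sq, sq_sqrt (by linarith)]
  push_cast
  ring

end Mean

lemma mul_tanh_sq_mul_g1_lt (θ : ℝ) {x : ℝ} (hx : 0 < x) :
    x * tanh √(2 * θ * x) ^ 2 * g1 θ x < x * g1 θ x := by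
  have := g1_pos θ hx
  calc x * tanh √(2 * θ * x) ^ 2 * g1 θ x < x * 1 * g1 θ x := by
        gcongr; exact tanh_sq_lt_one _
    _ = x * g1 θ x := by ring

lemma integrableOn_mul_tanh_sq_mul_g1 {θ : ℝ} (hθ : 0 ≤ θ) :
    IntegrableOn (fun x ↦ x * tanh √(2 * θ * x) ^ 2 * g1 θ x) (Ioi 0) := by
  refine (integrableOn_mul_g1 hθ).mono' (by fun_prop) ?_
  filter_upwards [ae_restrict_mem measurableSet_Ioi] with x (hx : 0 < x)
  have := (g1_pos θ hx).le
  rw [norm_of_nonneg (by positivity)]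
  exact (mul_tanh_sq_mul_g1_lt θ hx).le

lemma integral_mul_tanh_sq_mul_g1_lt {θ : ℝ} (hθ : 0 ≤ θ) :
    ∫ x in Ioi 0, x * tanh √(2 * θ * x) ^ 2 * g1 θ x < 1 + 2 * θ := by
  rw [← integral_mul_g1 hθ]
  refine setIntegral_lt_setIntegral_of_forall_lt measurableSet_Ioi (by simp)
    (integrableOn_mul_tanh_sq_mul_g1 hθ) (integrableOn_mul_g1 hθ) fun _ hx ↦
    mul_tanh_sq_mul_g1_lt θ hx

/-- The Fisher information of χ²₁(2θ) is strictly less than 1/(2θ), i.e. strictly less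
than half of the Fisher information 1/θ of the Poisson(θ) family. -/
theorem fisherInfo_lt_half_poisson (θ : ℝ) (hθ : 0 < θ) :
    fisherInfo θ < 1 / (2 * θ) := by
  have h := integral_mul_tanh_sq_mul_g1_lt hθ.le
  rw [fisherInfo, sub_lt_iff_lt_add, one_div, inv_mul_lt_iff₀ (by positivity), mul_add,
    mul_inv_cancel₀ (by positivity)]
  linarith
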